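/- Every sequential reserve matching (induced by any order of precedence over the categories) complies with eligibility requirements, is non-wasteful, and respects priorities. -/

import Mathlib

/-!
Processing category `c` on a pool `A` selects the eligible patients of `A` that have fewer than
`r c` eligible patients of higher `π_c`-priority in `A`. Since priorities are strict, this rank
takes each value below the number of eligible patients exactly once, so `c` receives
`min (r c) #eligible` patients: an eligible patient it passes over means `c` is full. A patient
it passes over also ranks below everyone it selects, and every patient unmatched at the end was
passed over by every category. Induction along the precedence order gives the three properties.
-/

open Finset

section ReserveSystem

variable {I C : Type*} [Fintype I] [DecidableEq I] [Fintype C] [DecidableEq C]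

/-- Patient `i` is eligible for category `c` (i.e. `i π_c ∅`). Priorities are encoded by
injective score functions `pr c : Option I → ℕ`, where `none` stands for `∅` and a
higher score means a higher priority. -/
def Elig (pr : C → Option I → ℕ) (c : C) (i : I) : Prop :=
  pr c none < pr c (some i)

instance (pr : C → Option I → ℕ) (c : C) (i : I) : Decidable (Elig pr c i) := by
  unfold Elig; infer_instance

/-- A matching assigns each patient a category or `none`, respecting capacities `r`. -/
def IsMatching (r : C → ℕ) (μ : I → Option C) : Prop :=
  ∀ c : C, (univ.filter (fun i => μ i = some c)).card ≤ r c

/-- `μ` complies with eligibility requirements. -/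
def CompliesEligibility (pr : C → Option I → ℕ) (μ : I → Option C) : Prop :=
  ∀ i c, μ i = some c → Elig pr c i

/-- `μ` is non-wasteful. -/
def NonWasteful (pr : C → Option I → ℕ) (r : C → ℕ) (μ : I → Option C) : Prop :=
  ∀ i c, Elig pr c i → μ i = none →
    (univ.filter (fun j => μ j = some c)).card = r c

/-- `μ` respects priorities. -/
def RespectsPriorities (pr : C → Option I → ℕ) (μ : I → Option C) : Prop :=
  ∀ i i' c, μ i = some c → μ i' = none → pr c (some i') < pr c (some i)

/-- Patients selected when category `c` with `k` units is processed on the pool `avail`: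
the `k` highest-`π_c`-priority eligible patients (all eligible ones if fewer than `k`). -/
def seqTop (pr : C → Option I → ℕ) (c : C) (k : ℕ) (avail : Finset I) : Finset I :=
  (avail.filter (fun i => Elig pr c i)).filter (fun i =>
    ((avail.filter (fun i' => Elig pr c i')).filter
        (fun j => pr c (some i) < pr c (some j))).card < k)

/-- The sequential reserve matching induced by processing the given list of categories in
order, over the pool `avail` of patients. -/
def seqMatch (pr : C → Option I → ℕ) (r : C → ℕ) : List C → Finset I → I → Option C
  | [], _, _ => none
  | c :: L, avail, i =>
      if i ∈ seqTop pr c (r c) avail then some c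
      else seqMatch pr r L (avail \ seqTop pr c (r c) avail) i

section RankAbove

variable {ι α : Type*} [LinearOrder α] {g : ι → α} {s : Finset ι} {i i' : ι}

def rankAbove (g : ι → α) (s : Finset ι) (i : ι) : ℕ := #{j ∈ s | g i < g j}

lemma rankAbove_lt_card (hi : i ∈ s) : rankAbove g s i < #s :=
  card_lt_card <| filter_ssubset.2 ⟨i, hi, lt_irrefl _⟩

lemma rankAbove_le_of_le (h : g i ≤ g i') : rankAbove g s i' ≤ rankAbove g s i :=
  card_le_card <| monotone_filter_right s fun _ _ hj => h.trans_lt hj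

lemma rankAbove_lt_of_lt (hi' : i' ∈ s) (h : g i < g i') :
    rankAbove g s i' < rankAbove g s i := by
  refine card_lt_card <| (ssubset_iff_of_subset ?_).2 ⟨i', ?_, ?_⟩
  · exact monotone_filter_right s fun _ _ hj => h.trans hj
  · exact mem_filter.2 ⟨hi', h⟩
  · exact fun hmem => lt_irrefl _ (mem_filter.1 hmem).2

lemma rankAbove_injOn (hg : Set.InjOn g s) : Set.InjOn (rankAbove g s) s := by
  intro i hi i' hi' h
  by_contra hne
  rcases lt_or_gt_of_ne ((hg.ne_iff hi hi').2 hne) with hlt | hlt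
  · exact (rankAbove_lt_of_lt hi' hlt).ne' h
  · exact (rankAbove_lt_of_lt hi hlt).ne h

lemma image_rankAbove (hg : Set.InjOn g s) : s.image (rankAbove g s) = range #s :=
  eq_of_subset_of_card_le (image_subset_iff.2 fun _ hi => mem_range.2 (rankAbove_lt_card hi))
    (by rw [card_range, card_image_of_injOn (rankAbove_injOn hg)])

lemma card_filter_rankAbove_lt (hg : Set.InjOn g s) (k : ℕ) :
    #{i ∈ s | rankAbove g s i < k} = min k #s := by
  rw [← card_image_of_injOn ((rankAbove_injOn hg).mono (filter_subset _ s)),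
    ← filter_image (p := (· < k)), image_rankAbove hg, ← card_range (min k #s)]
  congr 1
  ext m
  simp only [mem_filter, mem_range, lt_min_iff, and_comm]

end RankAbove

section SequentialReserve

omit [Fintype I] [DecidableEq I] [Fintype C] [DecidableEq C]

variable {pr : C → Option I → ℕ} {c : C} {k : ℕ} {avail : Finset I} {i i' : I}

lemma seqTop_eq_filter_rankAbove_lt : seqTop pr c k avail =
    {i ∈ {j ∈ avail | Elig pr c j} | rankAbove (pr c ∘ some) {j ∈ avail | Elig pr c j} i < k} :=
  rfl

lemma mem_seqTop : i ∈ seqTop pr c k avail ↔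
    i ∈ avail ∧ Elig pr c i ∧ rankAbove (pr c ∘ some) {j ∈ avail | Elig pr c j} i < k := by
  rw [seqTop_eq_filter_rankAbove_lt, mem_filter, mem_filter, and_assoc]

lemma seqTop_subset : seqTop pr c k avail ⊆ avail := fun _ hi => (mem_seqTop.1 hi).1

lemma elig_of_mem_seqTop (hi : i ∈ seqTop pr c k avail) : Elig pr c i := (mem_seqTop.1 hi).2.1

lemma card_seqTop_of_not_mem (hpr : Function.Injective (pr c)) (hi : i ∈ avail)
    (he : Elig pr c i) (hn : i ∉ seqTop pr c k avail) : #(seqTop pr c k avail) = k := by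
  have hiE : i ∈ {j ∈ avail | Elig pr c j} := mem_filter.2 ⟨hi, he⟩
  have hk : k ≤ rankAbove (pr c ∘ some) {j ∈ avail | Elig pr c j} i :=
    not_lt.1 fun hlt => hn (mem_seqTop.2 ⟨hi, he, hlt⟩)
  rw [seqTop_eq_filter_rankAbove_lt,
    card_filter_rankAbove_lt (hpr.comp (Option.some_injective I)).injOn,
    min_eq_left (hk.trans_lt (rankAbove_lt_card hiE)).le]

lemma lt_of_mem_seqTop_of_not_mem (hpr : Function.Injective (pr c))
    (hi : i ∈ seqTop pr c k avail) (hi' : i' ∈ avail) (hn : i' ∉ seqTop pr c k avail) :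
    pr c (some i') < pr c (some i) := by
  obtain ⟨-, hie, hik⟩ := mem_seqTop.1 hi
  by_cases hie' : Elig pr c i'
  · by_contra hle
    have hrank := (rankAbove_le_of_le (g := pr c ∘ some) (not_lt.1 hle)).trans_lt hik
    exact hn (mem_seqTop.2 ⟨hi', hie', hrank⟩)
  · exact (lt_of_le_of_ne (not_lt.1 hie') (hpr.ne (Option.some_ne_none i'))).trans hie

variable [DecidableEq I] {r : C → ℕ} {L : List C}

lemma seqMatch_cons_of_mem (hi : i ∈ seqTop pr c (r c) avail) :
    seqMatch pr r (c :: L) avail i = some c :=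
  if_pos hi

lemma seqMatch_cons_of_not_mem (hi : i ∉ seqTop pr c (r c) avail) :
    seqMatch pr r (c :: L) avail i = seqMatch pr r L (avail \ seqTop pr c (r c) avail) i :=
  if_neg hi

lemma exists_mem_seqTop_of_seqMatch_eq_some (h : seqMatch pr r L avail i = some c) :
    c ∈ L ∧ ∃ A ⊆ avail, i ∈ seqTop pr c (r c) A := by
  induction L generalizing avail with
  | nil => exact absurd h (Option.some_ne_none c).symm
  | cons c' L ih =>
    by_cases hi : i ∈ seqTop pr c' (r c') avail
    · obtain rfl : c' = c := Option.some.inj ((seqMatch_cons_of_mem hi).symm.trans h)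
      exact ⟨List.mem_cons_self, avail, subset_rfl, hi⟩
    · rw [seqMatch_cons_of_not_mem hi] at h
      obtain ⟨hc, A, hA, hiA⟩ := ih h
      exact ⟨List.mem_cons_of_mem _ hc, A, hA.trans sdiff_subset, hiA⟩

lemma mem_of_seqMatch_eq_some (h : seqMatch pr r L avail i = some c) : i ∈ avail :=
  have ⟨_, _, hA, hi⟩ := exists_mem_seqTop_of_seqMatch_eq_some h
  hA (seqTop_subset hi)

lemma elig_of_seqMatch_eq_some (h : seqMatch pr r L avail i = some c) : Elig pr c i :=
  have ⟨_, _, _, hi⟩ := exists_mem_seqTop_of_seqMatch_eq_some h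
  elig_of_mem_seqTop hi

lemma seqMatch_cons_self_eq_some_iff (hc : c ∉ L) :
    seqMatch pr r (c :: L) avail i = some c ↔ i ∈ seqTop pr c (r c) avail := by
  refine ⟨fun h => ?_, seqMatch_cons_of_mem⟩
  by_contra hi
  rw [seqMatch_cons_of_not_mem hi] at h
  exact hc (exists_mem_seqTop_of_seqMatch_eq_some h).1

lemma seqMatch_cons_eq_some_iff_of_ne {c' : C} (hne : c' ≠ c) :
    seqMatch pr r (c' :: L) avail i = some c ↔
      seqMatch pr r L (avail \ seqTop pr c' (r c') avail) i = some c := by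
  by_cases hi : i ∈ seqTop pr c' (r c') avail
  · rw [seqMatch_cons_of_mem hi, Option.some_inj]
    exact iff_of_false hne fun h => (mem_sdiff.1 (mem_of_seqMatch_eq_some h)).2 hi
  · rw [seqMatch_cons_of_not_mem hi]

lemma lt_of_seqMatch_eq_some_of_eq_none (hpr : Function.Injective (pr c))
    (h : seqMatch pr r L avail i = some c) (hi' : i' ∈ avail)
    (h' : seqMatch pr r L avail i' = none) : pr c (some i') < pr c (some i) := by
  induction L generalizing avail with
  | nil => exact absurd h (Option.some_ne_none c).symm
  | cons c' L ih =>
    have hi'n : i' ∉ seqTop pr c' (r c') avail := fun hmem =>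
      Option.some_ne_none _ ((seqMatch_cons_of_mem hmem).symm.trans h')
    rw [seqMatch_cons_of_not_mem hi'n] at h'
    by_cases hi : i ∈ seqTop pr c' (r c') avail
    · obtain rfl : c' = c := Option.some.inj ((seqMatch_cons_of_mem hi).symm.trans h)
      exact lt_of_mem_seqTop_of_not_mem hpr hi hi' hi'n
    · rw [seqMatch_cons_of_not_mem hi] at h
      exact ih h (mem_sdiff.2 ⟨hi', hi'n⟩) h'

variable [Fintype I] [DecidableEq C]

lemma card_seqMatch_eq_some_of_eq_none (hpr : Function.Injective (pr c)) (hnd : L.Nodup)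
    (hc : c ∈ L) (hi : i ∈ avail) (he : Elig pr c i) (h : seqMatch pr r L avail i = none) :
    #{j | seqMatch pr r L avail j = some c} = r c := by
  induction L generalizing avail with
  | nil => exact absurd hc List.not_mem_nil
  | cons c' L ih =>
    have hin : i ∉ seqTop pr c' (r c') avail := fun hmem =>
      Option.some_ne_none _ ((seqMatch_cons_of_mem hmem).symm.trans h)
    rw [seqMatch_cons_of_not_mem hin] at h
    rcases eq_or_ne c' c with rfl | hne
    · simp_rw [seqMatch_cons_self_eq_some_iff (List.nodup_cons.1 hnd).1, filter_univ_mem]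
      exact card_seqTop_of_not_mem hpr hi he hin
    · simp_rw [seqMatch_cons_eq_some_iff_of_ne hne]
      exact ih hnd.of_cons (List.mem_of_ne_of_mem hne.symm hc) (mem_sdiff.2 ⟨hi, hin⟩) h

end SequentialReserve

/-- Every sequential reserve matching complies with eligibility requirements, is
non-wasteful, and respects priorities. -/
theorem sequential_satisfies_axioms
    (pr : C → Option I → ℕ) (hpr : ∀ c, Function.Injective (pr c))
    (r : C → ℕ) (L : List C) (hnd : L.Nodup) (hall : ∀ c : C, c ∈ L) :
    CompliesEligibility pr (seqMatch pr r L univ) ∧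
      NonWasteful pr r (seqMatch pr r L univ) ∧
      RespectsPriorities pr (seqMatch pr r L univ) :=
  ⟨fun _ _ h => elig_of_seqMatch_eq_some h,
    fun i c he h => card_seqMatch_eq_some_of_eq_none (hpr c) hnd (hall c) (mem_univ i) he h,
    fun _ i' c h h' => lt_of_seqMatch_eq_some_of_eq_none (hpr c) h (mem_univ i') h'⟩

end ReserveSystem
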